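/- arXiv:1705.02507 — 3 statements merged into one kernel-verified Lean document; each statement's English description precedes it below -/
import Mathlib

section
/- Let D ⊂ ℝ² be a bounded measurable set whose boundary is a rectifiable curve of finite length L > 0, let δ = diam(D) be its diameter, and let 𝟏_D be its characteristic function. Then for every s ∈ (0, 1/2], the Besov–Nikolskii seminorm satisfies sup_{x ∈ ℝ², x ≠ 0} ‖𝟏_D(·+x) − 𝟏_D‖_{L²(ℝ²)} / |x|^s ≤ (L · δ^{1−2s})^{1/2}. -/
/-!
The squared `L²` norm of `𝟏_D(· + x) - 𝟏_D` is the area of `D ∆ (D - x)`. Each point `y` of this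
symmetric difference sees a boundary point on the segment `[y, y + x]`, so `D ∆ (D - x)` lies in
the region swept by the boundary curve `γ` translated along `[0, -x]`. Cut `γ` into arcs of small
diameter: the region swept by an arc of length `ℓ` fits in a box of area about `(‖x‖ + ε) ℓ`, so the
whole swept region has area at most `L ‖x‖`. For `‖x‖ > diam D` the translate is disjoint from `D`
and the area is `2 |D|`, independent of `x`; letting `‖x‖` decrease to `diam D` gives `2 |D| ≤ L δ`.
Hence the area is at most `L min (‖x‖, δ) ≤ L δ^(1 - 2s) ‖x‖^(2s)`.
-/

open MeasureTheory Set Metric Module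
open scoped Pointwise symmDiff ENNReal

local notation "ℝ²" => EuclideanSpace ℝ (Fin 2)

theorem IsPreconnected.inter_frontier_nonempty {X : Type*} [TopologicalSpace X] {s t : Set X}
    (hs : IsPreconnected s) (hst : (s ∩ t).Nonempty) (hst' : (s \ t).Nonempty) :
    (s ∩ frontier t).Nonempty := by
  rw [frontier_eq_closure_inter_closure]
  refine isPreconnected_closed_iff.1 hs _ _ isClosed_closure isClosed_closure ?_
    (hst.mono (inter_subset_inter_right _ subset_closure))
    (hst'.mono (inter_subset_inter_right _ subset_closure))
  exact fun y _ => (em (y ∈ t)).imp (fun h => subset_closure h) (fun h => subset_closure h)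

theorem symmDiff_preimage_add_subset_frontier_sub_segment {E : Type*} [NormedAddCommGroup E]
    [NormedSpace ℝ E] (D : Set E) (x : E) :
    D ∆ ((· + x) ⁻¹' D) ⊆ frontier D - segment ℝ 0 x := by
  intro y hy
  have hy' : (segment ℝ y (y + x) ∩ D).Nonempty ∧ (segment ℝ y (y + x) \ D).Nonempty := by
    rcases hy with ⟨hyD, hyxD⟩ | ⟨hyxD, hyD⟩
    · exact ⟨⟨y, left_mem_segment _ _ _, hyD⟩, ⟨y + x, right_mem_segment _ _ _, hyxD⟩⟩
    · exact ⟨⟨y + x, right_mem_segment _ _ _, hyxD⟩, ⟨y, left_mem_segment _ _ _, hyD⟩⟩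
  obtain ⟨z, hz, hzD⟩ :=
    (convex_segment y (y + x)).isPreconnected.inter_frontier_nonempty hy'.1 hy'.2
  have hzy : z - y ∈ segment ℝ (0 : E) x := by
    rw [← mem_segment_translate ℝ y]
    simpa using hz
  exact ⟨z, hzD, z - y, hzy, sub_sub_cancel z y⟩

theorem measure_symmDiff_preimage_add_le_two_mul {E : Type*} [AddGroup E] [MeasurableSpace E]
    [MeasurableAdd E] (μ : Measure E) [μ.IsAddRightInvariant] (D : Set E) (x : E) :
    μ (D ∆ ((· + x) ⁻¹' D)) ≤ 2 * μ D :=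
  calc μ (D ∆ ((· + x) ⁻¹' D)) ≤ μ D + μ ((· + x) ⁻¹' D) :=
        (measure_mono symmDiff_subset_union).trans (measure_union_le _ _)
    _ = 2 * μ D := by rw [measure_preimage_add_right, two_mul]

theorem measure_symmDiff_preimage_add_eq_two_mul_of_diam_lt {E : Type*} [NormedAddCommGroup E]
    [MeasurableSpace E] [MeasurableAdd E] (μ : Measure E) [μ.IsAddRightInvariant] {D : Set E}
    (hD : MeasurableSet D) (hDb : Bornology.IsBounded D) {x : E} (hx : diam D < ‖x‖) :
    μ (D ∆ ((· + x) ⁻¹' D)) = 2 * μ D := by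
  have hdisj : Disjoint D ((· + x) ⁻¹' D) := by
    refine disjoint_left.2 fun y hy hyx => hx.not_ge ?_
    simpa using dist_le_diam_of_mem hDb hy hyx
  rw [hdisj.symmDiff_eq_sup]
  exact (measure_union hdisj (hD.preimage (measurable_add_const x))).trans
    (by rw [measure_preimage_add_right, two_mul])

theorem eLpNorm_indicator_comp_add_sub_indicator {E : Type*} [AddGroup E] [MeasurableSpace E]
    [MeasurableAdd E] (μ : Measure E) {D : Set E} (hD : MeasurableSet D) (x : E) :
    eLpNorm (fun y => D.indicator (fun _ => (1 : ℝ)) (y + x) - D.indicator (fun _ => (1 : ℝ)) y)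
      2 μ = μ (D ∆ ((· + x) ⁻¹' D)) ^ (1 / 2 : ℝ) := by
  have hDx : MeasurableSet ((· + x) ⁻¹' D) := hD.preimage (measurable_add_const x)
  have : (fun y => D.indicator (fun _ => (1 : ℝ)) (y + x) - D.indicator (fun _ => (1 : ℝ)) y)
      = ((· + x) ⁻¹' D).indicator (fun _ => 1) - D.indicator (fun _ => 1) := rfl
  rw [this, eLpNorm_indicator_sub_indicator, symmDiff_comm,
    eLpNorm_indicator_const (hD.symmDiff hDx) two_ne_zero ENNReal.ofNat_ne_top]
  simp

theorem Real.min_le_rpow_mul_rpow {r δ θ : ℝ} (hr : 0 ≤ r) (hδ : 0 ≤ δ) (hθ₀ : 0 ≤ θ)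
    (hθ₁ : θ ≤ 1) : min r δ ≤ δ ^ (1 - θ) * r ^ θ := by
  have hm : 0 ≤ min r δ := le_min hr hδ
  calc min r δ = min r δ ^ (1 - θ) * min r δ ^ θ := by
        rw [← Real.rpow_add' hm (by norm_num), sub_add_cancel, Real.rpow_one]
    _ ≤ δ ^ (1 - θ) * r ^ θ := by
        gcongr ?_ * ?_
        · exact Real.rpow_le_rpow hm (min_le_right _ _) (by linarith)
        · exact Real.rpow_le_rpow hm (min_le_left _ _) hθ₀

theorem OrthonormalBasis.exists_norm_smul_eq {ι F : Type*} [Fintype ι] [NormedAddCommGroup F]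
    [InnerProductSpace ℝ F] [FiniteDimensional ℝ F] (hι : finrank ℝ F = Fintype.card ι)
    (i₀ : ι) (x : F) : ∃ b : OrthonormalBasis ι ℝ F, ‖x‖ • b i₀ = x := by
  by_cases hx : x = 0
  · have : Orthonormal ℝ ((∅ : Set ι).domRestrict fun _ => x) := by
      rw [orthonormal_iff_ite]; exact fun i => i.2.elim
    obtain ⟨b, -⟩ := this.exists_orthonormalBasis_extension_of_card_eq hι
    exact ⟨b, by simp [hx]⟩
  · have : Orthonormal ℝ (({i₀} : Set ι).domRestrict fun _ => ‖x‖⁻¹ • x) := by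
      rw [orthonormal_iff_ite]
      rintro ⟨i, rfl⟩ ⟨j, rfl⟩
      simp only [domRestrict_apply, real_inner_self_eq_norm_sq, ↓reduceIte, norm_smul,
        norm_inv, norm_norm, inv_mul_cancel₀ (norm_ne_zero_iff.2 hx), one_pow]
    obtain ⟨b, hb⟩ := this.exists_orthonormalBasis_extension_of_card_eq hι
    refine ⟨b, ?_⟩
    rw [hb i₀ rfl, smul_smul, mul_inv_cancel₀ (norm_ne_zero_iff.2 hx), one_smul]

theorem OrthonormalBasis.volume_setOf_repr_mem_Icc {ι F : Type*} [Fintype ι]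
    [NormedAddCommGroup F] [InnerProductSpace ℝ F] [FiniteDimensional ℝ F] [MeasurableSpace F]
    [BorelSpace F] (b : OrthonormalBasis ι ℝ F) (lo hi : ι → ℝ) :
    volume {y | ∀ i, b.repr y i ∈ Icc (lo i) (hi i)} = ∏ i, ENNReal.ofReal (hi i - lo i) := by
  have hmp := (PiLp.volume_preserving_ofLp ι).comp b.measurePreserving_repr
  rw [← Real.volume_Icc_pi, ← hmp.measure_preimage measurableSet_Icc.nullMeasurableSet]
  congr 1
  ext y
  simp [Pi.le_def, forall_and]

theorem IsCompact.volume_sub_segment_le {K : Set ℝ²} (hK : IsCompact K) (x : ℝ²) :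
    volume (K - segment ℝ 0 x) ≤ ENNReal.ofReal ((‖x‖ + 2 * diam K) * diam K) := by
  rcases K.eq_empty_or_nonempty with rfl | hne
  · simp
  obtain ⟨b, hb⟩ := OrthonormalBasis.exists_norm_smul_eq (by simp) (0 : Fin 2) x
  obtain ⟨m, hmK, hmin⟩ := hK.exists_isMinOn hne (f := fun y => b.repr y 1)
    (by fun_prop : Continuous fun y => b.repr y 1).continuousOn
  set d := diam K
  have hd : 0 ≤ d := diam_nonneg
  have hcoord : ∀ y ∈ K, ∀ i, |b.repr y i - b.repr m i| ≤ d := fun y hy i =>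
    calc |b.repr y i - b.repr m i| = ‖b.repr (y - m) i‖ := by simp [Real.norm_eq_abs]
      _ ≤ ‖b.repr (y - m)‖ := PiLp.norm_apply_le _ _
      _ = dist y m := by rw [b.repr.norm_map, dist_eq_norm]
      _ ≤ d := dist_le_diam_of_mem hK.isBounded hy hmK
  -- In the frame `b`, whose first axis points along `x`, the set `K - [0, x]` lies in a box of
  -- width `‖x‖ + 2 d` and height `d` resting on the lowest point `m` of `K`.
  have hsub : K - segment ℝ 0 x ⊆ {y | ∀ i, b.repr y i ∈
      Icc (![b.repr m 0 - d - ‖x‖, b.repr m 1] i) (![b.repr m 0 + d, b.repr m 1 + d] i)} := by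
    rintro _ ⟨y, hy, z, hz, rfl⟩
    rw [segment_eq_image'] at hz
    obtain ⟨t, ⟨ht0, ht1⟩, rfl⟩ := hz
    have h0 := abs_le.1 (hcoord y hy 0)
    have h1 := abs_le.1 (hcoord y hy 1)
    have htx : t * ‖x‖ ≤ ‖x‖ := mul_le_of_le_one_left (norm_nonneg x) ht1
    have htx₀ : 0 ≤ t * ‖x‖ := mul_nonneg ht0 (norm_nonneg x)
    have hmy : b.repr m 1 ≤ b.repr y 1 := hmin hy
    have hx : b.repr x = ‖x‖ • EuclideanSpace.single 0 1 := by
      rw [← b.repr_self, ← map_smul, hb]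
    have hz0 : b.repr (y - (0 + t • (x - 0))) 0 = b.repr y 0 - t * ‖x‖ := by simp [hx]
    have hz1 : b.repr (y - (0 + t • (x - 0))) 1 = b.repr y 1 := by simp [hx]
    refine Fin.forall_fin_two.2 ⟨⟨?_, ?_⟩, ?_, ?_⟩ <;>
      simp only [hz0, hz1, Matrix.cons_val_zero, Matrix.cons_val_one] <;> linarith
  calc volume (K - segment ℝ 0 x)
      ≤ _ := measure_mono hsub
    _ = ENNReal.ofReal ((‖x‖ + 2 * d) * d) := by
      rw [b.volume_setOf_repr_mem_Icc, Fin.prod_univ_two]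
      simp only [Matrix.cons_val_zero, Matrix.cons_val_one]
      rw [← ENNReal.ofReal_mul (by linarith [norm_nonneg x])]
      ring_nf

theorem ENNReal.le_mul_ofReal_of_forall_pos_le {a c : ℝ≥0∞} {r : ℝ} (hc : c ≠ ∞)
    (h : ∀ ε > 0, a ≤ c * ENNReal.ofReal (r + ε)) : a ≤ c * ENNReal.ofReal r := by
  have hlim : Filter.Tendsto (fun ε => c * ENNReal.ofReal (r + ε)) (nhdsWithin 0 (Ioi 0))
      (nhds (c * ENNReal.ofReal r)) := by
    refine ENNReal.Tendsto.const_mul ?_ (.inr hc)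
    have : Continuous fun ε : ℝ => ENNReal.ofReal (r + ε) :=
      ENNReal.continuous_ofReal.comp (continuous_const_add r)
    simpa using this.continuousWithinAt (s := Ioi 0) (x := 0) |>.tendsto
  exact ge_of_tendsto hlim (eventually_nhdsWithin_of_forall h)

theorem ediam_image_le_eVariationOn {α E : Type*} [LinearOrder α] [PseudoEMetricSpace E]
    (f : α → E) (s : Set α) : ediam (f '' s) ≤ eVariationOn f s :=
  ediam_image_le_iff.2 fun _ hx _ hy => eVariationOn.edist_le f hx hy

theorem volume_image_Icc_sub_segment_le_of_two_mul_diam_le {γ : ℝ → ℝ²} {u v ε : ℝ}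
    (hγ : ContinuousOn γ (Icc u v)) (hV : eVariationOn γ (Icc u v) ≠ ∞)
    (hε : 2 * diam (γ '' Icc u v) ≤ ε) (x : ℝ²) :
    volume (γ '' Icc u v - segment ℝ 0 x) ≤
      eVariationOn γ (Icc u v) * ENNReal.ofReal (‖x‖ + ε) := by
  have hdiam : ENNReal.ofReal (diam (γ '' Icc u v)) ≤ eVariationOn γ (Icc u v) :=
    ENNReal.ofReal_le_of_le_toReal (ENNReal.toReal_mono hV (ediam_image_le_eVariationOn _ _))
  refine ((isCompact_Icc.image_of_continuousOn hγ).volume_sub_segment_le x).trans ?_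
  rw [mul_comm, ENNReal.ofReal_mul (by positivity)]
  gcongr

theorem volume_image_Icc_sub_segment_le_of_local {γ : ℝ → ℝ²} {a b h : ℝ} (hh : 0 < h)
    (x : ℝ²) (C : ℝ≥0∞) (hlocal : ∀ u v, a ≤ u → v ≤ b → v - u ≤ h →
      volume (γ '' Icc u v - segment ℝ 0 x) ≤ eVariationOn γ (Icc u v) * C) :
    volume (γ '' Icc a b - segment ℝ 0 x) ≤ eVariationOn γ (Icc a b) * C := by
  have hstep : ∀ k : ℕ, ∀ c ∈ Icc a b, c ≤ a + k * h →
      volume (γ '' Icc a c - segment ℝ 0 x) ≤ eVariationOn γ (Icc a c) * C := by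
    intro k
    induction k with
    | zero => exact fun c hc hca => hlocal a c le_rfl hc.2 (by simp at hca; linarith)
    | succ k ih =>
      intro c hc hck
      by_cases hck' : c ≤ a + k * h
      · exact ih c hc hck'
      set c' := a + k * h
      have hac' : a ≤ c' := le_add_of_nonneg_right (by positivity)
      have hc'c : c' ≤ c := (not_le.1 hck').le
      calc volume (γ '' Icc a c - segment ℝ 0 x)
          ≤ volume (γ '' Icc a c' - segment ℝ 0 x) + volume (γ '' Icc c' c - segment ℝ 0 x) := by
            rw [← Icc_union_Icc_eq_Icc hac' hc'c, image_union, union_sub]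
            exact measure_union_le _ _
        _ ≤ eVariationOn γ (Icc a c') * C + eVariationOn γ (Icc c' c) * C :=
            add_le_add (ih c' ⟨hac', hc'c.trans hc.2⟩ le_rfl)
              (hlocal c' c hac' hc.2 (by push_cast at hck; linarith))
        _ = eVariationOn γ (Icc a c) * C := by
            rw [← add_mul]
            simpa using congrArg (· * C) (eVariationOn.Icc_add_Icc γ hac' hc'c (mem_univ c'))
  rcases lt_or_ge b a with hba | hab
  · simp [Icc_eq_empty_of_lt hba]
  obtain ⟨k, hk⟩ := exists_nat_ge ((b - a) / h)
  exact hstep k b ⟨hab, le_rfl⟩ (by rw [div_le_iff₀ hh] at hk; linarith)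

theorem volume_image_Icc_sub_segment_le {γ : ℝ → ℝ²} {a b : ℝ} (hγ : ContinuousOn γ (Icc a b))
    (hV : eVariationOn γ (Icc a b) ≠ ∞) (x : ℝ²) :
    volume (γ '' Icc a b - segment ℝ 0 x) ≤ eVariationOn γ (Icc a b) * ‖x‖ₑ := by
  rw [← ofReal_norm]
  refine ENNReal.le_mul_ofReal_of_forall_pos_le hV fun ε hε => ?_
  obtain ⟨h, hh, hγh⟩ := Metric.uniformContinuousOn_iff_le.1
    (isCompact_Icc.uniformContinuousOn_of_continuous hγ) (ε / 2) (by positivity)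
  refine volume_image_Icc_sub_segment_le_of_local hh x _ fun u v hau hvb hvu => ?_
  have hsub : Icc u v ⊆ Icc a b := Icc_subset_Icc hau hvb
  have hdiam : diam (γ '' Icc u v) ≤ ε / 2 :=
    diam_le_of_forall_dist_le (by positivity) <| forall_mem_image.2 fun s hs =>
      forall_mem_image.2 fun t ht => hγh s (hsub hs) t (hsub ht)
        (Real.dist_le_of_mem_Icc hs ht |>.trans hvu)
  exact volume_image_Icc_sub_segment_le_of_two_mul_diam_le (hγ.mono hsub)
    (ne_top_of_le_ne_top hV (eVariationOn.mono γ hsub)) (by linarith) x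

theorem volume_symmDiff_preimage_add_le_mul_min {D : Set ℝ²} (hD : MeasurableSet D)
    (hDb : Bornology.IsBounded D) {γ : ℝ → ℝ²} {a b : ℝ} (hγ : ContinuousOn γ (Icc a b))
    (hV : eVariationOn γ (Icc a b) ≠ ∞) (hDγ : frontier D ⊆ γ '' Icc a b) (x : ℝ²) :
    volume (D ∆ ((· + x) ⁻¹' D)) ≤
      eVariationOn γ (Icc a b) * ENNReal.ofReal (min ‖x‖ (diam D)) := by
  have hsweep : ∀ z : ℝ², volume (D ∆ ((· + z) ⁻¹' D)) ≤ eVariationOn γ (Icc a b) * ‖z‖ₑ :=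
    fun z => (measure_mono ((symmDiff_preimage_add_subset_frontier_sub_segment D z).trans
      (sub_subset_sub_right hDγ))).trans (volume_image_Icc_sub_segment_le hγ hV z)
  rcases le_total ‖x‖ (diam D) with h | h
  · rw [min_eq_left h, ofReal_norm]
    exact hsweep x
  rw [min_eq_right h]
  -- The bound `2 * volume D` is attained by every translate `z` with `‖z‖ > diam D`.
  refine (measure_symmDiff_preimage_add_le_two_mul volume D x).trans
    (ENNReal.le_mul_ofReal_of_forall_pos_le hV fun ε hε => ?_)
  obtain ⟨z, hz⟩ := exists_norm_eq ℝ² (by positivity : 0 ≤ diam D + ε)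
  rw [← measure_symmDiff_preimage_add_eq_two_mul_of_diam_lt volume hD hDb
    (by linarith : diam D < ‖z‖), ← hz, ofReal_norm]
  exact hsweep z

theorem stmt_0_general
    (D : Set (EuclideanSpace ℝ (Fin 2))) (hDmeas : MeasurableSet D)
    (hDbdd : Bornology.IsBounded D)
    (L : ℝ) (hL : 0 < L)
    (γ : ℝ → EuclideanSpace ℝ (Fin 2))
    (hγcont : ContinuousOn γ (Set.Icc 0 1))
    (hγsurj : frontier D ⊆ γ '' (Set.Icc 0 1))
    (hγlen : eVariationOn γ (Set.Icc 0 1) = ENNReal.ofReal L)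
    (s : ℝ) (hs0 : 0 < s) (hs : s ≤ 1 / 2) :
    ∀ x : EuclideanSpace ℝ (Fin 2), x ≠ 0 →
      (eLpNorm (fun y => D.indicator (fun _ => (1 : ℝ)) (y + x)
          - D.indicator (fun _ => (1 : ℝ)) y) 2 volume).toReal / ‖x‖ ^ s
        ≤ Real.sqrt (L * Metric.diam D ^ (1 - 2 * s)) := by
  intro x hx
  have hV : eVariationOn γ (Icc 0 1) ≠ ∞ := hγlen ▸ ENNReal.ofReal_ne_top
  have hsymm := volume_symmDiff_preimage_add_le_mul_min hDmeas hDbdd hγcont hV hγsurj x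
  rw [hγlen, ← ENNReal.ofReal_mul hL.le] at hsymm
  have hmin : min ‖x‖ (diam D) ≤ diam D ^ (1 - 2 * s) * (‖x‖ ^ s) ^ 2 := by
    rw [← Real.rpow_natCast, ← Real.rpow_mul (norm_nonneg x), mul_comm s]
    exact Real.min_le_rpow_mul_rpow (norm_nonneg x) diam_nonneg (by positivity) (by linarith)
  have hxs : 0 < ‖x‖ ^ s := by positivity
  rw [eLpNorm_indicator_comp_add_sub_indicator volume hDmeas x, ← ENNReal.toReal_rpow,
    ← Real.sqrt_eq_rpow, div_le_iff₀ hxs]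
  calc √(volume (D ∆ ((· + x) ⁻¹' D))).toReal
      ≤ √(L * diam D ^ (1 - 2 * s) * (‖x‖ ^ s) ^ 2) := by
        gcongr
        refine (ENNReal.toReal_le_of_le_ofReal (by positivity) hsymm).trans ?_
        rw [mul_assoc]
        gcongr
    _ = √(L * diam D ^ (1 - 2 * s)) * ‖x‖ ^ s := by
        rw [Real.sqrt_mul' _ (sq_nonneg _), Real.sqrt_sq hxs.le]

/-- Let `D ⊆ ℝ²` be a bounded measurable set whose boundary is a
rectifiable (closed) curve of finite length `L > 0`, and let `δ = diam D`.  Then for every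
`s ∈ (0, 1/2]`, `sup_{x ≠ 0} ‖𝟏_D(·+x) − 𝟏_D‖_{L²} / |x|^s ≤ (L · δ^{1−2s})^{1/2}`. -/
theorem stmt_0
    (D : Set (EuclideanSpace ℝ (Fin 2))) (hDmeas : MeasurableSet D)
    (hDbdd : Bornology.IsBounded D)
    (L : ℝ) (hL : 0 < L)
    (γ : ℝ → EuclideanSpace ℝ (Fin 2))
    (hγcont : ContinuousOn γ (Set.Icc 0 1))
    (hγclosed : γ 0 = γ 1)
    (hγsurj : frontier D ⊆ γ '' (Set.Icc 0 1))
    (hγlen : eVariationOn γ (Set.Icc 0 1) = ENNReal.ofReal L)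
    (s : ℝ) (hs0 : 0 < s) (hs : s ≤ 1 / 2) :
    ∀ x : EuclideanSpace ℝ (Fin 2), x ≠ 0 →
      (eLpNorm (fun y => D.indicator (fun _ => (1 : ℝ)) (y + x)
          - D.indicator (fun _ => (1 : ℝ)) y) 2 volume).toReal / ‖x‖ ^ s
        ≤ Real.sqrt (L * Metric.diam D ^ (1 - 2 * s)) :=
  stmt_0_general D hDmeas hDbdd L hL γ hγcont hγsurj hγlen s hs0 hs
end

section
/- Let f = 𝟏_{[x₁,x₂]×[y₁,y₂]} be the indicator of a rectangle in ℝ² with side lengths a = x₂−x₁ > 0 and b = y₂−y₁ > 0. Let p ∈ [1,∞) and s ∈ (0, 1/p). Then the Besov–Nikolskii norm ‖f‖'_{B^s_{p,∞}} := ‖f‖_{L^p} + sup_{h≠0} ‖f − τ_h f‖_{L^p}/|h|^s satisfies ‖f‖'_{B^s_{p,∞}} ≤ (ab)^{1/p}(1 + 4^{1/p} min{a,b}^{−s}). In particular, if a ≤ min{b,1}, then ‖f‖'_{B^s_{p,∞}} ≤ 5 a^{1/p−s} b^{1/p}. -/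
/-!
Let `R` be the rectangle and `m = min a b`. For the indicator `f` of `R`, `‖f - τ_h f‖_p ^ p` is
the measure of `R ∆ (R - h)`. Each of the two halves of this symmetric difference has measure at
most `|R| = ab`, and also at most `(a + b)|h|`, since a point of `R` that leaves `R` under the shift
lies within `|h₀|` of a vertical side or within `|h₁|` of a horizontal one. As `(a + b) m ≤ 2ab`,
this gives `|R ∆ (R - h)| ≤ 4ab · min 1 (|h| / m)`, and since `s ≤ 1/p` the `1/p`-th power of
`min 1 (|h| / m)` is at most `(|h| / m) ^ s`.
-/

open MeasureTheory Set

/-- The Besov–Nikolskii norm `‖f‖'_{B^s_{p,∞}} = ‖f‖_{L^p} + sup_{h≠0} ‖f − τ_h f‖_{L^p}/|h|^s`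
on functions on `ℝ²`. -/
noncomputable def besovNorm' (p s : ℝ) (f : EuclideanSpace ℝ (Fin 2) → ℝ) : ℝ :=
  (eLpNorm f (ENNReal.ofReal p) volume).toReal +
    ⨆ h : {h : EuclideanSpace ℝ (Fin 2) // h ≠ 0},
      (eLpNorm (fun y => f y - f (y + h.val)) (ENNReal.ofReal p) volume).toReal / ‖h.val‖ ^ s

open scoped symmDiff

section Translation

variable {G : Type*} [MeasurableSpace G] [AddGroup G] [MeasurableAdd G] (μ : Measure G)

lemma measure_symmDiff_preimage_add_le [μ.IsAddRightInvariant] (S : Set G) (h : G) :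
    μ (S ∆ ((· + h) ⁻¹' S)) ≤ μ (S \ (· + h) ⁻¹' S) + μ (S \ (· + -h) ⁻¹' S) := by
  have hback : (· + h) ⁻¹' S \ S = (· + h) ⁻¹' (S \ (· + -h) ⁻¹' S) := by
    ext y; simp
  rw [Set.symmDiff_def]
  calc μ (S \ (· + h) ⁻¹' S ∪ (· + h) ⁻¹' S \ S)
      ≤ μ (S \ (· + h) ⁻¹' S) + μ ((· + h) ⁻¹' S \ S) := measure_union_le _ _
    _ = μ (S \ (· + h) ⁻¹' S) + μ (S \ (· + -h) ⁻¹' S) := by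
      rw [hback, measure_preimage_add_right]

lemma eLpNorm_indicator_sub_translate {S : Set G} (hS : MeasurableSet S) (h : G)
    {p : ENNReal} (hp0 : p ≠ 0) (hp : p ≠ ⊤) :
    eLpNorm (fun y => S.indicator (fun _ => (1 : ℝ)) y - S.indicator (fun _ => (1 : ℝ)) (y + h))
      p μ = μ (S ∆ ((· + h) ⁻¹' S)) ^ (1 / p.toReal) := by
  have hτS : MeasurableSet ((· + h) ⁻¹' S) := measurable_add_const h hS
  rw [show (fun y => S.indicator (fun _ => (1 : ℝ)) y - S.indicator (fun _ => (1 : ℝ)) (y + h))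
      = S.indicator (fun _ => 1) - ((· + h) ⁻¹' S).indicator (fun _ => 1) from rfl,
    eLpNorm_indicator_sub_indicator, eLpNorm_indicator_const (hS.symmDiff hτS) hp0 hp]
  simp

end Translation

def planeProd (A B : Set ℝ) : Set (EuclideanSpace ℝ (Fin 2)) := {y | y 0 ∈ A ∧ y 1 ∈ B}

lemma measurableSet_planeProd {A B : Set ℝ} (hA : MeasurableSet A) (hB : MeasurableSet B) :
    MeasurableSet (planeProd A B) :=
  (hA.preimage (by fun_prop)).inter (hB.preimage (by fun_prop))

lemma volume_planeProd {A B : Set ℝ} (hA : MeasurableSet A) (hB : MeasurableSet B) :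
    volume (planeProd A B) = volume A * volume B := by
  have hpi : {y : Fin 2 → ℝ | y 0 ∈ A ∧ y 1 ∈ B} = univ.pi ![A, B] := by
    ext y; simp [Fin.forall_fin_two]
  have hmeas : MeasurableSet (univ.pi ![A, B]) :=
    MeasurableSet.univ_pi (by simp [Fin.forall_fin_two, hA, hB])
  rw [show planeProd A B = (MeasurableEquiv.toLp 2 (Fin 2 → ℝ)).symm ⁻¹'
      {y : Fin 2 → ℝ | y 0 ∈ A ∧ y 1 ∈ B} from rfl, hpi,
    (EuclideanSpace.volume_preserving_symm_measurableEquiv_toLp (Fin 2)).measure_preimage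
      hmeas.nullMeasurableSet, volume_pi_pi, Fin.prod_univ_two]
  rfl

lemma planeProd_diff_preimage_add_subset (A B : Set ℝ) (h : EuclideanSpace ℝ (Fin 2)) :
    planeProd A B \ (· + h) ⁻¹' planeProd A B
      ⊆ planeProd (A \ (· + h 0) ⁻¹' A) B ∪ planeProd A (B \ (· + h 1) ⁻¹' B) := by
  rintro y ⟨⟨hyA, hyB⟩, hy⟩
  by_cases hA : y 0 + h 0 ∈ A
  · exact Or.inr ⟨hyA, hyB, fun hB => hy ⟨hA, hB⟩⟩
  · exact Or.inl ⟨⟨hyA, hA⟩, hyB⟩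

lemma volume_Icc_diff_preimage_add_le (x₁ x₂ c : ℝ) :
    volume (Icc x₁ x₂ \ (· + c) ⁻¹' Icc x₁ x₂) ≤ ENNReal.ofReal |c| := by
  rcases le_total 0 c with hc | hc
  · calc volume (Icc x₁ x₂ \ (· + c) ⁻¹' Icc x₁ x₂) ≤ volume (Ioc (x₂ - c) x₂) := by
          refine measure_mono fun t ⟨⟨h₁, h₂⟩, ht⟩ => ⟨?_, h₂⟩
          by_contra! h; exact ht ⟨by linarith, by linarith⟩
      _ = ENNReal.ofReal |c| := by rw [Real.volume_Ioc, abs_of_nonneg hc, sub_sub_cancel]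
  · calc volume (Icc x₁ x₂ \ (· + c) ⁻¹' Icc x₁ x₂) ≤ volume (Ico x₁ (x₁ - c)) := by
          refine measure_mono fun t ⟨⟨h₁, h₂⟩, ht⟩ => ⟨h₁, ?_⟩
          by_contra! h; exact ht ⟨by linarith, by linarith⟩
      _ = ENNReal.ofReal |c| := by rw [Real.volume_Ico, abs_of_nonpos hc, sub_sub_cancel_left]

lemma volume_rect_diff_preimage_add_le {x₁ x₂ y₁ y₂ : ℝ} (hx : x₁ ≤ x₂) (hy : y₁ ≤ y₂)
    (h : EuclideanSpace ℝ (Fin 2)) :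
    volume (planeProd (Icc x₁ x₂) (Icc y₁ y₂) \ (· + h) ⁻¹' planeProd (Icc x₁ x₂) (Icc y₁ y₂))
      ≤ ENNReal.ofReal ((x₂ - x₁ + (y₂ - y₁)) * ‖h‖) := by
  have hdiff (u₁ u₂ c : ℝ) : MeasurableSet (Icc u₁ u₂ \ (· + c) ⁻¹' Icc u₁ u₂) :=
    measurableSet_Icc.diff (measurable_add_const c measurableSet_Icc)
  calc _ ≤ volume (planeProd (Icc x₁ x₂ \ (· + h 0) ⁻¹' Icc x₁ x₂) (Icc y₁ y₂))
          + volume (planeProd (Icc x₁ x₂) (Icc y₁ y₂ \ (· + h 1) ⁻¹' Icc y₁ y₂)) :=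
        (measure_mono (planeProd_diff_preimage_add_subset _ _ h)).trans (measure_union_le _ _)
    _ ≤ ENNReal.ofReal |h 0| * ENNReal.ofReal (y₂ - y₁)
          + ENNReal.ofReal (x₂ - x₁) * ENNReal.ofReal |h 1| := by
        rw [volume_planeProd (hdiff _ _ _) measurableSet_Icc,
          volume_planeProd measurableSet_Icc (hdiff _ _ _), Real.volume_Icc, Real.volume_Icc]
        gcongr <;> exact volume_Icc_diff_preimage_add_le _ _ _
    _ ≤ ENNReal.ofReal ((x₂ - x₁ + (y₂ - y₁)) * ‖h‖) := by
        rw [← ENNReal.ofReal_mul (abs_nonneg _), ← ENNReal.ofReal_mul (by linarith),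
          ← ENNReal.ofReal_add (by positivity) (mul_nonneg (by linarith) (abs_nonneg _))]
        gcongr
        have h0 : |h 0| ≤ ‖h‖ := PiLp.norm_apply_le h 0
        have h1 : |h 1| ≤ ‖h‖ := PiLp.norm_apply_le h 1
        nlinarith

lemma two_mul_min_rpow_le {a b r p s : ℝ} (ha : 0 < a) (hb : 0 < b) (hr : 0 < r) (hp : 0 < p)
    (hs : 0 ≤ s) (hsp : s ≤ 1 / p) :
    (2 * min (a * b) ((a + b) * r)) ^ (1 / p)
      ≤ (a * b) ^ (1 / p) * (4 ^ (1 / p) * min a b ^ (-s)) * r ^ s := by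
  set m := min a b
  have hm : 0 < m := lt_min ha hb
  have hmab : (a + b) * m ≤ 2 * (a * b) := by
    nlinarith [mul_le_mul_of_nonneg_left (min_le_right a b) ha.le,
      mul_le_mul_of_nonneg_left (min_le_left a b) hb.le]
  have hX : 2 * min (a * b) ((a + b) * r) ≤ 4 * (a * b) * min 1 (r / m) := by
    rw [mul_min_of_nonneg 1 (r / m) (by positivity : (0 : ℝ) ≤ 4 * (a * b)), mul_one]
    refine le_min (by linarith [min_le_left (a * b) ((a + b) * r), mul_pos ha hb]) ?_
    rw [mul_div_assoc', le_div_iff₀ hm]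
    nlinarith [min_le_right (a * b) ((a + b) * r)]
  have hmin : min 1 (r / m) ^ (1 / p) ≤ (r / m) ^ s :=
    (Real.rpow_le_rpow_of_exponent_ge' (by positivity) (min_le_left _ _) hs hsp).trans
      (Real.rpow_le_rpow (by positivity) (min_le_right _ _) hs)
  calc (2 * min (a * b) ((a + b) * r)) ^ (1 / p)
      ≤ (4 * (a * b) * min 1 (r / m)) ^ (1 / p) :=
        Real.rpow_le_rpow (by positivity) hX (by positivity)
    _ = 4 ^ (1 / p) * (a * b) ^ (1 / p) * min 1 (r / m) ^ (1 / p) := by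
        rw [Real.mul_rpow (by positivity) (by positivity),
          Real.mul_rpow (by norm_num) (by positivity)]
    _ ≤ 4 ^ (1 / p) * (a * b) ^ (1 / p) * (r / m) ^ s := by gcongr
    _ = (a * b) ^ (1 / p) * (4 ^ (1 / p) * m ^ (-s)) * r ^ s := by
        rw [Real.div_rpow hr.le hm.le, Real.rpow_neg hm.le]; ring

lemma rpow_mul_one_add_le {a b p s : ℝ} (ha : 0 < a) (ha1 : a ≤ 1) (hb : 0 < b) (hp : 1 ≤ p)
    (hs : 0 ≤ s) :
    (a * b) ^ (1 / p) * (1 + 4 ^ (1 / p) * a ^ (-s)) ≤ 5 * a ^ (1 / p - s) * b ^ (1 / p) := by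
  have h4 : (4 : ℝ) ^ (1 / p) ≤ 4 :=
    Real.rpow_le_self_of_one_le (by norm_num) (div_le_one_of_le₀ hp (by linarith))
  have ha' : a ^ (1 / p) ≤ a ^ (1 / p - s) :=
    Real.rpow_le_rpow_of_exponent_ge ha ha1 (by linarith)
  calc (a * b) ^ (1 / p) * (1 + 4 ^ (1 / p) * a ^ (-s))
      = (a ^ (1 / p) + 4 ^ (1 / p) * a ^ (1 / p - s)) * b ^ (1 / p) := by
        rw [Real.mul_rpow ha.le hb.le, sub_eq_add_neg, Real.rpow_add ha]; ring
    _ ≤ (a ^ (1 / p - s) + 4 * a ^ (1 / p - s)) * b ^ (1 / p) := by gcongr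
    _ = 5 * a ^ (1 / p - s) * b ^ (1 / p) := by ring

lemma volume_rect_symmDiff_preimage_add_le {x₁ x₂ y₁ y₂ : ℝ} (hx : x₁ ≤ x₂) (hy : y₁ ≤ y₂)
    (h : EuclideanSpace ℝ (Fin 2)) :
    volume (planeProd (Icc x₁ x₂) (Icc y₁ y₂) ∆ ((· + h) ⁻¹' planeProd (Icc x₁ x₂) (Icc y₁ y₂)))
      ≤ ENNReal.ofReal
          (2 * min ((x₂ - x₁) * (y₂ - y₁)) ((x₂ - x₁ + (y₂ - y₁)) * ‖h‖)) := by
  set R := planeProd (Icc x₁ x₂) (Icc y₁ y₂)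
  have hdiff (g : EuclideanSpace ℝ (Fin 2)) (hg : ‖g‖ = ‖h‖) :
      volume (R \ (· + g) ⁻¹' R)
        ≤ ENNReal.ofReal (min ((x₂ - x₁) * (y₂ - y₁)) ((x₂ - x₁ + (y₂ - y₁)) * ‖h‖)) := by
    rw [ENNReal.ofReal_min, ENNReal.ofReal_mul (by linarith), ← Real.volume_Icc, ← Real.volume_Icc,
      ← volume_planeProd measurableSet_Icc measurableSet_Icc, ← hg]
    exact le_min (measure_mono sdiff_subset) (volume_rect_diff_preimage_add_le hx hy g)
  calc _ ≤ volume (R \ (· + h) ⁻¹' R) + volume (R \ (· + -h) ⁻¹' R) :=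
        measure_symmDiff_preimage_add_le volume R h
    _ ≤ _ := by
        rw [two_mul, ENNReal.ofReal_add (by positivity) (by positivity)]
        exact add_le_add (hdiff h rfl) (hdiff (-h) (norm_neg h))

lemma eLpNorm_indicator_rect_toReal {x₁ x₂ y₁ y₂ p : ℝ} (hx : x₁ ≤ x₂) (hy : y₁ ≤ y₂)
    (hp : 0 < p) :
    (eLpNorm ((planeProd (Icc x₁ x₂) (Icc y₁ y₂)).indicator fun _ => (1 : ℝ))
      (ENNReal.ofReal p) volume).toReal = ((x₂ - x₁) * (y₂ - y₁)) ^ (1 / p) := by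
  rw [eLpNorm_indicator_const (measurableSet_planeProd measurableSet_Icc measurableSet_Icc)
      (by simpa using hp) ENNReal.ofReal_ne_top,
    volume_planeProd measurableSet_Icc measurableSet_Icc, Real.volume_Icc, Real.volume_Icc,
    ← ENNReal.ofReal_mul (by linarith), ENNReal.toReal_ofReal hp.le]
  simp [← ENNReal.toReal_rpow,
    ENNReal.toReal_ofReal (mul_nonneg (sub_nonneg.2 hx) (sub_nonneg.2 hy))]

lemma eLpNorm_indicator_rect_sub_translate_div_le {x₁ x₂ y₁ y₂ p s : ℝ} (hx : x₁ < x₂)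
    (hy : y₁ < y₂) (hp : 0 < p) (hs : 0 ≤ s) (hsp : s ≤ 1 / p) {h : EuclideanSpace ℝ (Fin 2)}
    (hh : h ≠ 0) :
    (eLpNorm (fun y => (planeProd (Icc x₁ x₂) (Icc y₁ y₂)).indicator (fun _ => (1 : ℝ)) y
        - (planeProd (Icc x₁ x₂) (Icc y₁ y₂)).indicator (fun _ => (1 : ℝ)) (y + h))
        (ENNReal.ofReal p) volume).toReal / ‖h‖ ^ s
      ≤ ((x₂ - x₁) * (y₂ - y₁)) ^ (1 / p) * (4 ^ (1 / p) * min (x₂ - x₁) (y₂ - y₁) ^ (-s)) := by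
  have hr : 0 < ‖h‖ := norm_pos_iff.2 hh
  rw [eLpNorm_indicator_sub_translate volume
      (measurableSet_planeProd measurableSet_Icc measurableSet_Icc) h (by simpa using hp)
      ENNReal.ofReal_ne_top,
    ← ENNReal.toReal_rpow, ENNReal.toReal_ofReal hp.le, div_le_iff₀ (by positivity)]
  calc _ ≤ (2 * min ((x₂ - x₁) * (y₂ - y₁)) ((x₂ - x₁ + (y₂ - y₁)) * ‖h‖)) ^ (1 / p) :=
        Real.rpow_le_rpow ENNReal.toReal_nonneg
          (ENNReal.toReal_le_of_le_ofReal (by positivity)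
            (volume_rect_symmDiff_preimage_add_le hx.le hy.le h)) (by positivity)
    _ ≤ _ := two_mul_min_rpow_le (sub_pos.2 hx) (sub_pos.2 hy) hr hp hs hsp

/-- For the indicator `f` of a rectangle with sides `a, b > 0`,
`p ∈ [1,∞)` and `s ∈ (0, 1/p)`:
`‖f‖'_{B^s_{p,∞}} ≤ (ab)^{1/p}(1 + 4^{1/p} (min a b)^{−s})`, and if `a ≤ min b 1` then
`‖f‖'_{B^s_{p,∞}} ≤ 5 a^{1/p−s} b^{1/p}`. -/
theorem stmt_2 (x₁ x₂ y₁ y₂ a b p s : ℝ)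
    (ha : a = x₂ - x₁) (hb : b = y₂ - y₁) (ha0 : 0 < a) (hb0 : 0 < b)
    (hp : 1 ≤ p) (hs0 : 0 < s) (hsp : s < 1 / p) :
    besovNorm' p s
        (Set.indicator {y | y 0 ∈ Set.Icc x₁ x₂ ∧ y 1 ∈ Set.Icc y₁ y₂} (fun _ => (1 : ℝ)))
      ≤ (a * b) ^ (1 / p) * (1 + (4 : ℝ) ^ (1 / p) * (min a b) ^ (-s))
    ∧ (a ≤ min b 1 →
      besovNorm' p s
          (Set.indicator {y | y 0 ∈ Set.Icc x₁ x₂ ∧ y 1 ∈ Set.Icc y₁ y₂} (fun _ => (1 : ℝ)))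
        ≤ 5 * a ^ (1 / p - s) * b ^ (1 / p)) := by
  change besovNorm' p s ((planeProd (Icc x₁ x₂) (Icc y₁ y₂)).indicator fun _ => 1) ≤ _ ∧
    (_ → besovNorm' p s ((planeProd (Icc x₁ x₂) (Icc y₁ y₂)).indicator fun _ => 1) ≤ _)
  subst ha hb
  have hp0 : 0 < p := by linarith
  have hbound : besovNorm' p s ((planeProd (Icc x₁ x₂) (Icc y₁ y₂)).indicator fun _ => 1)
      ≤ ((x₂ - x₁) * (y₂ - y₁)) ^ (1 / p)
        * (1 + 4 ^ (1 / p) * min (x₂ - x₁) (y₂ - y₁) ^ (-s)) := by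
    rw [besovNorm', eLpNorm_indicator_rect_toReal (sub_pos.1 ha0).le (sub_pos.1 hb0).le hp0,
      mul_add, mul_one]
    gcongr
    refine Real.iSup_le (fun h => ?_) (by positivity)
    exact eLpNorm_indicator_rect_sub_translate_div_le (sub_pos.1 ha0) (sub_pos.1 hb0) hp0 hs0.le
      hsp.le h.2
  refine ⟨hbound, fun hab => hbound.trans ?_⟩
  rw [min_eq_left (hab.trans (min_le_left _ _))]
  exact rpow_mul_one_add_le ha0 (hab.trans (min_le_right _ _)) hb0 hp hs0.le
end

section
/- Let c = (c₁, c₂) : ℝ → ℝ² be a smooth curve with c₁ > 0, constant outside [0,1]. For h ∈ L^∞(ℝ), define E_c h on ℝ² by summing signed layers over the monotone pieces of c₂ as follows: write {ċ₂ > 0} = ⋃_i I⁺_i and {ċ₂ < 0} = ⋃_i I⁻_i as countable unions of disjoint open intervals; for each interval set (E^±_{c,i}h)(x₁,x₂) = h(c₂^{-1}(x₂; I^±_i)) if x₂ ∈ c₂(I^±_i) and 0 ≤ x₁ ≤ c₁(c₂^{-1}(x₂; I^±_i)), and 0 otherwise; and E_c h = Σ_i E⁺_{c,i}h − Σ_i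 E⁻_{c,i}h. Then E_c h ∈ L²(ℝ²), with ‖E_c h‖_{L²} ≤ Σ_{±,i} ((1/2)‖h‖²_{L∞}‖c₁‖_{L∞}‖c̈₂‖_{L∞})^{1/2} (t^±_{i,1} − t^±_{i,0}) < ∞. -/
open MeasureTheory Set
open scoped Classical

open Filter
open scoped ENNReal NNReal Topology

section Helpers


theorem stmt4_iSup_rpow_of_monotone {a : ℕ → ℝ≥0∞} (ha : Monotone a) {q : ℝ} (hq : 0 ≤ q) :
    (⨆ n, a n) ^ q = ⨆ n, a n ^ q := by
  refine tendsto_nhds_unique ((ENNReal.continuous_rpow_const.tendsto _).comp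
    (tendsto_atTop_iSup ha)) (tendsto_atTop_iSup (fun m n h => ENNReal.rpow_le_rpow (ha h) hq))

theorem stmt4_lintegral_Lp_tsum_le {α : Type*} [MeasurableSpace α] {μ : Measure α}
    {f : ℕ → α → ℝ≥0∞} (hf : ∀ i, Measurable (f i)) {p : ℝ} (hp1 : 1 ≤ p) :
    (∫⁻ a, (∑' i, f i a) ^ p ∂μ) ^ (1/p) ≤ ∑' i, (∫⁻ a, f i a ^ p ∂μ) ^ (1/p) := by
  have hp0 : 0 < p := lt_of_lt_of_le zero_lt_one hp1
  have key : ∀ n, (∫⁻ a, (∑ i ∈ Finset.range n, f i a) ^ p ∂μ) ^ (1/p)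
      ≤ ∑ i ∈ Finset.range n, (∫⁻ a, f i a ^ p ∂μ) ^ (1/p) := by
    intro n
    induction n with
    | zero => simp [ENNReal.zero_rpow_of_pos hp0,
        ENNReal.zero_rpow_of_pos (show (0:ℝ) < 1/p by positivity), hp0]
    | succ n ih =>
        simp_rw [Finset.sum_range_succ]
        have hmeas : Measurable fun a => ∑ i ∈ Finset.range n, f i a :=
          Finset.measurable_sum _ fun i _ => hf i
        calc (∫⁻ a, (∑ i ∈ Finset.range n, f i a + f n a) ^ p ∂μ) ^ (1/p)
            ≤ (∫⁻ a, (∑ i ∈ Finset.range n, f i a) ^ p ∂μ) ^ (1/p)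
              + (∫⁻ a, f n a ^ p ∂μ) ^ (1/p) := by
              have := ENNReal.lintegral_Lp_add_le (μ := μ) hmeas.aemeasurable
                (hf n).aemeasurable hp1
              simpa [Pi.add_apply] using this
          _ ≤ _ := add_le_add ih le_rfl
  have hmono : ∀ a, Monotone fun n => ∑ i ∈ Finset.range n, f i a := fun a m n h =>
    Finset.sum_le_sum_of_subset (Finset.range_subset_range.2 h)
  have h1 : ∀ a, (∑' i, f i a) ^ p = ⨆ n, (∑ i ∈ Finset.range n, f i a) ^ p := by
    intro a
    rw [ENNReal.tsum_eq_iSup_nat, stmt4_iSup_rpow_of_monotone (hmono a) hp0.le]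
  calc (∫⁻ a, (∑' i, f i a) ^ p ∂μ) ^ (1/p)
      = (⨆ n, ∫⁻ a, (∑ i ∈ Finset.range n, f i a) ^ p ∂μ) ^ (1/p) := by
        rw [← lintegral_iSup (fun n => (Finset.measurable_sum _ fun i _ => hf i).pow_const _)]
        · simp_rw [h1]
        · intro m n h
          exact fun a => ENNReal.rpow_le_rpow (hmono a h) hp0.le
    _ = ⨆ n, (∫⁻ a, (∑ i ∈ Finset.range n, f i a) ^ p ∂μ) ^ (1/p) := by
        refine stmt4_iSup_rpow_of_monotone (fun m n h => lintegral_mono fun a =>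
          ENNReal.rpow_le_rpow (hmono a h) hp0.le) (by positivity)
    _ ≤ ∑' i, (∫⁻ a, f i a ^ p ∂μ) ^ (1/p) := by
        refine iSup_le fun n => (key n).trans ?_
        exact ENNReal.sum_le_tsum _

theorem stmt4_taylor_bd (f : ℝ → ℝ) (hf : ContDiff ℝ (⊤ : ℕ∞) f) (C₂ : ℝ)
    (hC₂ : ∀ t, |deriv (deriv f) t| ≤ C₂) {a b : ℝ} (hab : a ≤ b)
    (hda : deriv f a = 0) : |f b - f a| ≤ 1/2 * C₂ * (b-a)^2 := by
  have hfi : ContDiff ℝ ((⊤:ℕ∞):WithTop ℕ∞) f := hf.of_le (by simp)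
  have hdf : Differentiable ℝ f := hf.differentiable (by simp)
  have hdf' : ContDiff ℝ ((⊤:ℕ∞):WithTop ℕ∞) (deriv f) := (contDiff_infty_iff_deriv.mp hfi).2
  have hder : ∀ t ∈ Icc a b, |deriv f t| ≤ C₂ * (t - a) := by
    intro t ht
    have := Convex.norm_image_sub_le_of_norm_deriv_le (f := deriv f) (s := univ) (C := C₂)
      (fun x _ => (hdf'.differentiable (by simp) x))
      (fun x _ => by simpa [Real.norm_eq_abs] using hC₂ x) convex_univ (mem_univ a) (mem_univ t)
    rw [hda, sub_zero] at this
    calc |deriv f t| ≤ C₂ * ‖t - a‖ := this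
      _ = C₂ * (t - a) := by rw [Real.norm_eq_abs, abs_of_nonneg (by linarith [ht.1])]
  have hint : f b - f a = ∫ t in a..b, deriv f t :=
    (intervalIntegral.integral_deriv_eq_sub (fun x _ => hdf x)
      ((hdf'.continuous.intervalIntegrable a b))).symm
  rw [hint, ← Real.norm_eq_abs]
  have hbd := intervalIntegral.norm_integral_le_of_norm_le (μ := volume) (a := a) (b := b)
    (f := fun t => deriv f t) (g := fun t => C₂ * (t - a)) hab ?_ ?_
  · have hC₂0 : 0 ≤ C₂ := le_trans (abs_nonneg _) (hC₂ 0)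
    have h2 : (∫ t in a..b, (t - a)) = (b - a)^2 / 2 := by
      have h3 : (∫ t in a..b, (t - a)) = (∫ t in a..b, t) - ∫ t in a..b, (a:ℝ) := by
        rw [← intervalIntegral.integral_sub intervalIntegral.intervalIntegrable_id
          (intervalIntegrable_const (c := a))]
      rw [h3, integral_id, intervalIntegral.integral_const, smul_eq_mul]
      ring
    refine hbd.trans ?_
    rw [intervalIntegral.integral_const_mul, h2]
    nlinarith [sq_nonneg (b - a)]
  · refine ae_of_all _ (fun t ht => ?_)
    simpa [Real.norm_eq_abs] using hder t ⟨ht.1.le, ht.2⟩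
  · exact (continuous_const.mul (continuous_id.sub continuous_const)).intervalIntegrable a b

theorem stmt4_endpoint_zero (f : ℝ → ℝ) (hf : ContDiff ℝ (⊤ : ℕ∞) f) (hconst : ∀ t ≤ (0:ℝ), f t = f 0)
    {a b : ℝ} (hab : a < b) (ha0 : 0 ≤ a)
    (hsign : ∀ t ∈ Ioo a b, 0 < deriv f t)
    (hnotmem : 0 < a → ¬ 0 < deriv f a) : deriv f a = 0 := by
  have hd : Continuous (deriv f) := hf.continuous_deriv (by simp)
  have hge : 0 ≤ deriv f a := by
    refine ge_of_tendsto ((hd.tendsto a).mono_left (nhdsWithin_le_nhds (s := Ioi a))) ?_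
    filter_upwards [Ioo_mem_nhdsGT hab] with t ht using (hsign t ht).le
  rcases eq_or_lt_of_le ha0 with h0 | h0
  · subst h0
    have h1 : derivWithin f (Iic (0:ℝ)) 0 = deriv f 0 :=
      (hf.differentiable (by simp) 0).derivWithin (uniqueDiffOn_Iic 0 0 self_mem_Iic)
    have h2 : derivWithin f (Iic (0:ℝ)) 0 = 0 :=
      (derivWithin_congr (f₁ := f) (f := fun _ => f 0) (s := Iic (0:ℝ))
        (fun t ht => hconst t ht) (hconst 0 le_rfl)).trans
        (congrFun (derivWithin_fun_const _ _) _)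
    rw [← h1, h2]
  · exact le_antisymm (not_lt.mp (hnotmem h0)) hge

theorem stmt4_sub01 {a b : ℝ} (hlt : a < b) (hsub : Ioo a b ⊆ Ioo 0 1) : 0 ≤ a ∧ b ≤ 1 := by
  constructor
  · by_contra hneg
    push_neg at hneg
    obtain ⟨t, ht1, ht2⟩ := exists_between (lt_min hlt hneg : a < min b 0)
    have := hsub ⟨ht1, ht2.trans_le (min_le_left _ _)⟩
    exact absurd this.1 (not_lt.2 (ht2.trans_le (min_le_right _ _)).le)
  · by_contra hneg
    push_neg at hneg
    obtain ⟨t, ht1, ht2⟩ := exists_between (max_lt hlt hneg : max a 1 < b)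
    have := hsub ⟨(le_max_left _ _).trans_lt ht1, ht2⟩
    exact absurd this.2 (not_lt.2 ((le_max_right _ _).trans ht1.le))

theorem stmt4_notmem_iUnion {A B : ℕ → ℝ}
    (hdisj : Pairwise (Function.onFun Disjoint fun i => Ioo (A i) (B i))) {i : ℕ}
    (hib : A i < B i) : A i ∉ ⋃ j, Ioo (A j) (B j) := by
  intro hmem
  obtain ⟨j, hj⟩ := mem_iUnion.1 hmem
  have hij : j ≠ i := by rintro rfl; exact lt_irrefl _ hj.1
  obtain ⟨t, ht1, ht2⟩ := exists_between (lt_min hib hj.2 : A i < min (B i) (B j))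
  exact Set.disjoint_left.1 (hdisj hij) ⟨hj.1.trans ht1, ht2.trans_le (min_le_right _ _)⟩
    ⟨ht1, ht2.trans_le (min_le_left _ _)⟩

theorem stmt4_core_bound (c : ℝ → ℝ × ℝ) (hc : Continuous c) (h : ℝ → ℝ) (hmeas : Measurable h)
    (H C₁ : ℝ) (hH : ∀ t, |h t| ≤ H) (hC₁ : ∀ t, (c t).1 ≤ C₁) (hC₁0 : 0 ≤ C₁)
    (a b u v M : ℝ) (g G : ℝ → ℝ) (hG : Measurable G)
    (himage : (fun t => (c t).2) '' Ioo a b = Ioo u v)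
    (hGg : ∀ y ∈ Ioo u v, G y = g y)
    (hM : v - u ≤ M) :
    Measurable (fun x : ℝ × ℝ =>
      if x.2 ∈ (fun t => (c t).2) '' Ioo a b ∧ 0 ≤ x.1 ∧ x.1 ≤ (c (g x.2)).1
        then h (g x.2) else 0) ∧
    ∀ q : ℕ, 1 ≤ q →
      (∫⁻ x : ℝ × ℝ, (‖(if x.2 ∈ (fun t => (c t).2) '' Ioo a b ∧ 0 ≤ x.1 ∧ x.1 ≤ (c (g x.2)).1
        then h (g x.2) else 0 : ℝ)‖₊ : ℝ≥0∞) ^ (q:ℝ) ∂volume) ≤ ENNReal.ofReal (H^q * C₁ * M) := by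
  have hH0 : 0 ≤ H := le_trans (abs_nonneg _) (hH 0)
  set E : ℝ × ℝ → ℝ := fun x =>
    if x.2 ∈ (fun t => (c t).2) '' Ioo a b ∧ 0 ≤ x.1 ∧ x.1 ≤ (c (g x.2)).1
      then h (g x.2) else 0 with hE
  set S : Set (ℝ × ℝ) := {x | x.2 ∈ Ioo u v ∧ 0 ≤ x.1 ∧ x.1 ≤ (c (G x.2)).1} with hS
  have m1 : Measurable fun x : ℝ × ℝ => (c (G x.2)).1 :=
    (continuous_fst.comp hc).measurable.comp (hG.comp measurable_snd)
  have hSm : MeasurableSet S := by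
    refine ((measurableSet_Ioo.preimage measurable_snd).inter ?_)
    exact ((measurableSet_Ici.preimage measurable_fst).inter (measurableSet_le measurable_fst m1))
  have hEeq : E = S.indicator (fun x => h (G x.2)) := by
    funext x
    by_cases hx : x.2 ∈ Ioo u v
    · have hgG : G x.2 = g x.2 := hGg _ hx
      simp only [hE, hS, himage, indicator, mem_setOf_eq, hx, true_and, hgG, mem_Ici]
    · simp only [hE, hS, himage, indicator, mem_setOf_eq, hx, false_and, if_false]
  have hEmeas : Measurable E := by
    rw [hEeq]
    exact (hmeas.comp (hG.comp measurable_snd)).indicator hSm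
  refine ⟨hEmeas, fun q hq => ?_⟩
  have hptw : ∀ x, (‖E x‖₊ : ℝ≥0∞) ^ (q:ℝ) ≤
      S.indicator (fun _ => ENNReal.ofReal (H^q)) x := by
    intro x
    by_cases hx : x ∈ S
    · rw [hEeq, indicator_of_mem hx, indicator_of_mem hx]
      calc ((‖h (G x.2)‖₊ : ℝ≥0∞)) ^ (q:ℝ) = ((‖h (G x.2)‖₊ : ℝ≥0∞)) ^ q := by
            rw [ENNReal.rpow_natCast]
        _ ≤ (ENNReal.ofReal H) ^ q := by
            refine pow_le_pow_left' ?_ q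
            rw [← enorm_eq_nnnorm, Real.enorm_eq_ofReal_abs]
            exact ENNReal.ofReal_le_ofReal (hH _)
        _ = ENNReal.ofReal (H^q) := by rw [ENNReal.ofReal_pow hH0]
    · rw [hEeq, indicator_of_notMem hx, indicator_of_notMem hx]
      simp [ENNReal.zero_rpow_of_pos (by positivity : (0:ℝ) < (q:ℝ))]
  calc (∫⁻ x : ℝ × ℝ, (‖E x‖₊ : ℝ≥0∞) ^ (q:ℝ) ∂volume)
      ≤ ∫⁻ x, S.indicator (fun _ => ENNReal.ofReal (H^q)) x ∂volume := lintegral_mono hptw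
    _ = ENNReal.ofReal (H^q) * volume S := lintegral_indicator_const hSm _
    _ ≤ ENNReal.ofReal (H^q) * (ENNReal.ofReal C₁ * ENNReal.ofReal M) := by
        refine mul_le_mul_right ?_ _
        have hsub : S ⊆ Icc 0 C₁ ×ˢ Ioo u v := by
          rintro x ⟨h1, h2, h3⟩
          exact ⟨⟨h2, le_trans h3 (hC₁ _)⟩, h1⟩
        calc volume S ≤ volume (Icc 0 C₁ ×ˢ Ioo u v) := measure_mono hsub
          _ = ENNReal.ofReal (C₁ - 0) * ENNReal.ofReal (v - u) := by
              rw [MeasureTheory.Measure.volume_eq_prod, Measure.prod_prod,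
                Real.volume_Icc, Real.volume_Ioo]
          _ ≤ ENNReal.ofReal C₁ * ENNReal.ofReal M := by
              rw [sub_zero]
              exact mul_le_mul' le_rfl (ENNReal.ofReal_le_ofReal hM)
    _ = ENNReal.ofReal (H^q * C₁ * M) := by
        rw [← ENNReal.ofReal_mul (by positivity), ← ENNReal.ofReal_mul (by positivity),
          mul_assoc]

theorem stmt4_piece_bound (c : ℝ → ℝ × ℝ) (hc : ContDiff ℝ (⊤ : ℕ∞) c)
    (h : ℝ → ℝ) (hmeas : Measurable h) (H C₁ C₂ : ℝ)
    (hH : ∀ t, |h t| ≤ H) (hC₁ : ∀ t, (c t).1 ≤ C₁) (hC₁0 : 0 ≤ C₁)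
    (hC₂ : ∀ t, |deriv (deriv (fun u => (c u).2)) t| ≤ C₂)
    (a b : ℝ) (hab : a ≤ b) (g : ℝ → ℝ) (hg : ∀ t ∈ Ioo a b, g ((c t).2) = t)
    (hsign : (∀ t ∈ Ioo a b, 0 < deriv (fun u => (c u).2) t) ∨
             (∀ t ∈ Ioo a b, deriv (fun u => (c u).2) t < 0))
    (hda : a < b → deriv (fun u => (c u).2) a = 0) :
    Measurable (fun x : ℝ × ℝ =>
      if x.2 ∈ (fun t => (c t).2) '' Ioo a b ∧ 0 ≤ x.1 ∧ x.1 ≤ (c (g x.2)).1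
        then h (g x.2) else 0) ∧
    ∀ q : ℕ, 1 ≤ q →
      (∫⁻ x : ℝ × ℝ, (‖(if x.2 ∈ (fun t => (c t).2) '' Ioo a b ∧ 0 ≤ x.1 ∧ x.1 ≤ (c (g x.2)).1
        then h (g x.2) else 0 : ℝ)‖₊ : ℝ≥0∞) ^ (q:ℝ) ∂volume) ≤
        ENNReal.ofReal (H^q * C₁ * (1/2 * C₂ * (b-a)^2)) := by
  rcases eq_or_lt_of_le hab with rfl | hlt
  · have hempty : (fun t => (c t).2) '' Ioo a a = (∅ : Set ℝ) := by
      rw [Ioo_self, image_empty]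
    constructor
    · have : (fun x : ℝ × ℝ =>
          if x.2 ∈ (fun t => (c t).2) '' Ioo a a ∧ 0 ≤ x.1 ∧ x.1 ≤ (c (g x.2)).1
            then h (g x.2) else 0) = fun _ => (0:ℝ) := by
        funext x; simp [hempty]
      rw [this]; exact measurable_const
    · intro q hq
      have : ∀ x : ℝ × ℝ, (‖(if x.2 ∈ (fun t => (c t).2) '' Ioo a a ∧ 0 ≤ x.1 ∧
          x.1 ≤ (c (g x.2)).1 then h (g x.2) else 0 : ℝ)‖₊ : ℝ≥0∞) ^ (q:ℝ) = 0 := by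
        intro x
        simp [hempty, ENNReal.zero_rpow_of_pos (by positivity : (0:ℝ) < (q:ℝ))]
      simp only [this, lintegral_zero]
      exact zero_le
  · set c₂ : ℝ → ℝ := fun u => (c u).2 with hc₂def
    have hc₂ : ContDiff ℝ (⊤ : ℕ∞) c₂ := contDiff_snd.comp hc
    have hcont : ContinuousOn c₂ (Icc a b) := hc₂.continuous.continuousOn
    have htay : |c₂ b - c₂ a| ≤ 1/2 * C₂ * (b-a)^2 := stmt4_taylor_bd c₂ hc₂ C₂ hC₂ hab (hda hlt)
    rcases hsign with hpos | hneg
    · have hmono : StrictMonoOn c₂ (Icc a b) :=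
        strictMonoOn_of_deriv_pos (convex_Icc a b) hcont
          (by rw [interior_Icc]; exact hpos)
      have himage : (fun t => (c t).2) '' Ioo a b = Ioo (c₂ a) (c₂ b) := by
        refine Subset.antisymm ?_ (intermediate_value_Ioo hab hcont)
        rintro y ⟨t, ht, rfl⟩
        exact ⟨hmono (left_mem_Icc.2 hab) ⟨ht.1.le, ht.2.le⟩ ht.1,
          hmono ⟨ht.1.le, ht.2.le⟩ (right_mem_Icc.2 hab) ht.2⟩
      set G : ℝ → ℝ := fun y => sSup (insert a {t ∈ Icc a b | c₂ t ≤ y}) with hGdef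
      have hbdd : ∀ y, BddAbove (insert a {t ∈ Icc a b | c₂ t ≤ y}) := by
        intro y; refine ⟨b, ?_⟩
        rintro x (rfl | hx)
        · exact hab
        · exact hx.1.2
      have hGmono : Monotone G := by
        intro y z hyz
        refine csSup_le_csSup (hbdd z) (insert_nonempty _ _) ?_
        exact insert_subset_insert (fun t ht => ⟨ht.1, ht.2.trans hyz⟩)
      have hGg : ∀ y ∈ Ioo (c₂ a) (c₂ b), G y = g y := by
        intro y hy
        rw [← himage] at hy
        obtain ⟨s, hs, rfl⟩ := hy
        have hset : insert a {t ∈ Icc a b | c₂ t ≤ c₂ s} = Icc a s := by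
          ext t
          rw [mem_insert_iff]
          constructor
          · rintro (rfl | ⟨htI, hts⟩)
            · exact ⟨le_rfl, hs.1.le⟩
            · refine ⟨htI.1, ?_⟩
              by_contra hst
              push_neg at hst
              exact absurd (hmono ⟨hs.1.le, hs.2.le⟩ htI hst) (not_lt.2 hts)
          · intro ht
            exact Or.inr ⟨⟨ht.1, ht.2.trans hs.2.le⟩,
              hmono.monotoneOn ⟨ht.1, ht.2.trans hs.2.le⟩ ⟨hs.1.le, hs.2.le⟩ ht.2⟩
        rw [hGdef]
        simp only
        rw [hset, csSup_Icc hs.1.le, hg s hs]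
      have hM : c₂ b - c₂ a ≤ 1/2 * C₂ * (b-a)^2 := le_trans (le_abs_self _) htay
      exact stmt4_core_bound c hc.continuous h hmeas H C₁ hH hC₁ hC₁0 a b (c₂ a) (c₂ b) _
        g G hGmono.measurable himage hGg hM
    · have hanti : StrictAntiOn c₂ (Icc a b) :=
        strictAntiOn_of_deriv_neg (convex_Icc a b) hcont
          (by rw [interior_Icc]; exact hneg)
      have himage : (fun t => (c t).2) '' Ioo a b = Ioo (c₂ b) (c₂ a) := by
        refine Subset.antisymm ?_ (intermediate_value_Ioo' hab hcont)
        rintro y ⟨t, ht, rfl⟩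
        exact ⟨hanti ⟨ht.1.le, ht.2.le⟩ (right_mem_Icc.2 hab) ht.2,
          hanti (left_mem_Icc.2 hab) ⟨ht.1.le, ht.2.le⟩ ht.1⟩
      set G : ℝ → ℝ := fun y => sSup (insert a {t ∈ Icc a b | y ≤ c₂ t}) with hGdef
      have hbdd : ∀ y, BddAbove (insert a {t ∈ Icc a b | y ≤ c₂ t}) := by
        intro y; refine ⟨b, ?_⟩
        rintro x (rfl | hx)
        · exact hab
        · exact hx.1.2
      have hGanti : Antitone G := by
        intro y z hyz
        refine csSup_le_csSup (hbdd y) (insert_nonempty _ _) ?_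
        exact insert_subset_insert (fun t ht => ⟨ht.1, hyz.trans ht.2⟩)
      have hGg : ∀ y ∈ Ioo (c₂ b) (c₂ a), G y = g y := by
        intro y hy
        rw [← himage] at hy
        obtain ⟨s, hs, rfl⟩ := hy
        have hset : insert a {t ∈ Icc a b | c₂ s ≤ c₂ t} = Icc a s := by
          ext t
          rw [mem_insert_iff]
          constructor
          · rintro (rfl | ⟨htI, hts⟩)
            · exact ⟨le_rfl, hs.1.le⟩
            · refine ⟨htI.1, ?_⟩
              by_contra hst
              push_neg at hst
              exact absurd (hanti ⟨hs.1.le, hs.2.le⟩ htI hst) (not_lt.2 hts)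
          · intro ht
            exact Or.inr ⟨⟨ht.1, ht.2.trans hs.2.le⟩,
              hanti.antitoneOn ⟨ht.1, ht.2.trans hs.2.le⟩ ⟨hs.1.le, hs.2.le⟩ ht.2⟩
        rw [hGdef]
        simp only
        rw [hset, csSup_Icc hs.1.le, hg s hs]
      have hM : c₂ a - c₂ b ≤ 1/2 * C₂ * (b-a)^2 := by
        rw [abs_sub_comm] at htay
        exact le_trans (le_abs_self _) htay
      exact stmt4_core_bound c hc.continuous h hmeas H C₁ hH hC₁ hC₁0 a b (c₂ b) (c₂ a) _
        g G hGanti.measurable himage hGg hM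

end Helpers

/-- For a smooth curve `c` with `c₁ > 0`, constant outside `[0,1]`, and
`h ∈ L^∞(ℝ)`, the operator `E_c h` (built from signed layers over the monotone pieces of
`c₂`) is in `L²(ℝ²)`, with
`‖E_c h‖_{L²} ≤ Σ_{±,i} ((1/2)‖h‖²_∞ ‖c₁‖_∞ ‖c̈₂‖_∞)^{1/2} (t^±_{i,1} − t^±_{i,0})`. -/
theorem stmt_4 (c : ℝ → ℝ × ℝ) (hc : ContDiff ℝ (⊤ : ℕ∞) c)
    (hpos : ∀ t, 0 < (c t).1)
    (hconst0 : ∀ t ≤ (0:ℝ), c t = c 0) (hconst1 : ∀ t, (1:ℝ) ≤ t → c t = c 1)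
    (h : ℝ → ℝ) (hmeas : Measurable h)
    (H C₁ C₂ : ℝ)
    (hH : ∀ t, |h t| ≤ H) (hC₁ : ∀ t, (c t).1 ≤ C₁)
    (hC₂ : ∀ t, |deriv (deriv (fun u => (c u).2)) t| ≤ C₂)
    -- the monotone pieces of `c₂`: countably many disjoint open intervals
    (ap bp am bm : ℕ → ℝ)
    (habp : ∀ i, ap i ≤ bp i) (habm : ∀ i, am i ≤ bm i)
    (hdisjp : Pairwise (Function.onFun Disjoint fun i => Set.Ioo (ap i) (bp i)))
    (hdisjm : Pairwise (Function.onFun Disjoint fun i => Set.Ioo (am i) (bm i)))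
    (hcovp : {t ∈ Set.Ioo (0:ℝ) 1 | 0 < deriv (fun u => (c u).2) t} = ⋃ i, Set.Ioo (ap i) (bp i))
    (hcovm : {t ∈ Set.Ioo (0:ℝ) 1 | deriv (fun u => (c u).2) t < 0} = ⋃ i, Set.Ioo (am i) (bm i))
    -- the local inverses of `c₂` on each interval
    (gp gm : ℕ → ℝ → ℝ)
    (hgp : ∀ i, ∀ t ∈ Set.Ioo (ap i) (bp i), gp i ((c t).2) = t)
    (hgm : ∀ i, ∀ t ∈ Set.Ioo (am i) (bm i), gm i ((c t).2) = t) :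
    let Ep : ℕ → ℝ × ℝ → ℝ := fun i x =>
      if x.2 ∈ (fun t => (c t).2) '' Set.Ioo (ap i) (bp i) ∧ 0 ≤ x.1 ∧ x.1 ≤ (c (gp i x.2)).1
        then h (gp i x.2) else 0
    let Em : ℕ → ℝ × ℝ → ℝ := fun i x =>
      if x.2 ∈ (fun t => (c t).2) '' Set.Ioo (am i) (bm i) ∧ 0 ≤ x.1 ∧ x.1 ≤ (c (gm i x.2)).1
        then h (gm i x.2) else 0
    let E : ℝ × ℝ → ℝ := fun x => (∑' i, Ep i x) - (∑' i, Em i x)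
    MemLp E 2 volume ∧
      (eLpNorm E 2 volume).toReal ≤
        Real.sqrt ((1 / 2) * H ^ 2 * C₁ * C₂) *
          ((∑' i, (bp i - ap i)) + (∑' i, (bm i - am i))) := by
  intro Ep Em E
  have hH0 : 0 ≤ H := le_trans (abs_nonneg _) (hH 0)
  have hC₁0 : 0 ≤ C₁ := le_trans (hpos 0).le (hC₁ 0)
  have hC₂0 : 0 ≤ C₂ := le_trans (abs_nonneg _) (hC₂ 0)
  set K := Real.sqrt ((1 / 2) * H ^ 2 * C₁ * C₂) with hK
  have hK0 : 0 ≤ K := Real.sqrt_nonneg _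
  have hKsq : K ^ 2 = (1 / 2) * H ^ 2 * C₁ * C₂ := Real.sq_sqrt (by positivity)
  set dp : ℕ → ℝ := fun i => bp i - ap i with hdp
  set dm : ℕ → ℝ := fun i => bm i - am i with hdm
  have hdp0 : ∀ i, 0 ≤ dp i := fun i => sub_nonneg.2 (habp i)
  have hdm0 : ∀ i, 0 ≤ dm i := fun i => sub_nonneg.2 (habm i)
  have hsubp : ∀ i, Set.Ioo (ap i) (bp i) ⊆ Set.Ioo 0 1 := fun i t ht =>
    ((Set.ext_iff.1 hcovp t).2 (Set.mem_iUnion.2 ⟨i, ht⟩)).1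
  have hsignp : ∀ i, ∀ t ∈ Set.Ioo (ap i) (bp i), 0 < deriv (fun u => (c u).2) t := fun i t ht =>
    ((Set.ext_iff.1 hcovp t).2 (Set.mem_iUnion.2 ⟨i, ht⟩)).2
  have hsubm : ∀ i, Set.Ioo (am i) (bm i) ⊆ Set.Ioo 0 1 := fun i t ht =>
    ((Set.ext_iff.1 hcovm t).2 (Set.mem_iUnion.2 ⟨i, ht⟩)).1
  have hsignm : ∀ i, ∀ t ∈ Set.Ioo (am i) (bm i), deriv (fun u => (c u).2) t < 0 := fun i t ht =>
    ((Set.ext_iff.1 hcovm t).2 (Set.mem_iUnion.2 ⟨i, ht⟩)).2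
  have hdnegderiv : ∀ t, deriv (fun u => -(c u).2) t = -deriv (fun u => (c u).2) t :=
    fun t => deriv.neg
  have hd0p : ∀ i, ap i < bp i → deriv (fun u => (c u).2) (ap i) = 0 := by
    intro i hib
    obtain ⟨ha0, hb1⟩ := stmt4_sub01 hib (hsubp i)
    refine stmt4_endpoint_zero _ (contDiff_snd.comp hc)
      (fun t ht => congrArg Prod.snd (hconst0 t ht)) hib ha0 (hsignp i) ?_
    intro hap hcon
    exact stmt4_notmem_iUnion hdisjp hib ((Set.ext_iff.1 hcovp _).1
      ⟨⟨hap, lt_of_lt_of_le hib hb1⟩, hcon⟩)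
  have hd0m : ∀ i, am i < bm i → deriv (fun u => (c u).2) (am i) = 0 := by
    intro i hib
    obtain ⟨ha0, hb1⟩ := stmt4_sub01 hib (hsubm i)
    have hneg := stmt4_endpoint_zero (fun u => -(c u).2) ((contDiff_snd.comp hc).neg)
      (fun t ht => congrArg (fun p : ℝ × ℝ => -p.2) (hconst0 t ht)) hib ha0
      (fun t ht => by rw [hdnegderiv]; exact neg_pos.2 (hsignm i t ht)) ?_
    · rw [hdnegderiv] at hneg
      exact neg_eq_zero.1 hneg
    · intro hap hcon
      rw [hdnegderiv] at hcon
      exact stmt4_notmem_iUnion hdisjm hib ((Set.ext_iff.1 hcovm _).1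
        ⟨⟨hap, lt_of_lt_of_le hib hb1⟩, neg_pos.1 hcon⟩)
  have hEp : ∀ i, Measurable (Ep i) ∧ ∀ q : ℕ, 1 ≤ q →
      (∫⁻ x : ℝ × ℝ, (‖Ep i x‖₊ : ℝ≥0∞) ^ (q:ℝ) ∂volume) ≤
        ENNReal.ofReal (H^q * C₁ * (1/2 * C₂ * (dp i)^2)) := fun i =>
    stmt4_piece_bound c hc h hmeas H C₁ C₂ hH hC₁ hC₁0 hC₂ (ap i) (bp i) (habp i)
      (gp i) (hgp i) (Or.inl (hsignp i)) (hd0p i)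
  have hEm : ∀ i, Measurable (Em i) ∧ ∀ q : ℕ, 1 ≤ q →
      (∫⁻ x : ℝ × ℝ, (‖Em i x‖₊ : ℝ≥0∞) ^ (q:ℝ) ∂volume) ≤
        ENNReal.ofReal (H^q * C₁ * (1/2 * C₂ * (dm i)^2)) := fun i =>
    stmt4_piece_bound c hc h hmeas H C₁ C₂ hH hC₁ hC₁0 hC₂ (am i) (bm i) (habm i)
      (gm i) (hgm i) (Or.inr (hsignm i)) (hd0m i)
  have hdp1 : ∀ i, dp i ≤ 1 := by
    intro i
    rcases eq_or_lt_of_le (habp i) with heq | hlt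
    · simp [hdp, ← heq]
    · obtain ⟨ha0, hb1⟩ := stmt4_sub01 hlt (hsubp i)
      simp only [hdp]
      linarith
  have hdm1 : ∀ i, dm i ≤ 1 := by
    intro i
    rcases eq_or_lt_of_le (habm i) with heq | hlt
    · simp [hdm, ← heq]
    · obtain ⟨ha0, hb1⟩ := stmt4_sub01 hlt (hsubm i)
      simp only [hdm]
      linarith
  have hvolp : ∑' i, ENNReal.ofReal (dp i) ≤ 1 := by
    calc ∑' i, ENNReal.ofReal (dp i) = ∑' i, volume (Set.Ioo (ap i) (bp i)) := by
          simp_rw [Real.volume_Ioo]; rfl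
      _ = volume (⋃ i, Set.Ioo (ap i) (bp i)) :=
          (measure_iUnion hdisjp fun i => measurableSet_Ioo).symm
      _ ≤ volume (Set.Ioo (0:ℝ) 1) := measure_mono (by rw [← hcovp]; exact Set.sep_subset _ _)
      _ = 1 := by rw [Real.volume_Ioo]; norm_num
  have hvolm : ∑' i, ENNReal.ofReal (dm i) ≤ 1 := by
    calc ∑' i, ENNReal.ofReal (dm i) = ∑' i, volume (Set.Ioo (am i) (bm i)) := by
          simp_rw [Real.volume_Ioo]; rfl
      _ = volume (⋃ i, Set.Ioo (am i) (bm i)) :=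
          (measure_iUnion hdisjm fun i => measurableSet_Ioo).symm
      _ ≤ volume (Set.Ioo (0:ℝ) 1) := measure_mono (by rw [← hcovm]; exact Set.sep_subset _ _)
      _ = 1 := by rw [Real.volume_Ioo]; norm_num
  have hsump : Summable dp := by
    have hne : (∑' i, ENNReal.ofReal (dp i)) ≠ ⊤ := (lt_of_le_of_lt hvolp ENNReal.one_lt_top).ne
    have h2 : Summable fun i => (dp i).toNNReal := ENNReal.tsum_coe_ne_top_iff_summable.1 hne
    exact (NNReal.summable_coe.2 h2).congr fun i => Real.coe_toNNReal _ (hdp0 i)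
  have hsumm : Summable dm := by
    have hne : (∑' i, ENNReal.ofReal (dm i)) ≠ ⊤ := (lt_of_le_of_lt hvolm ENNReal.one_lt_top).ne
    have h2 : Summable fun i => (dm i).toNNReal := ENNReal.tsum_coe_ne_top_iff_summable.1 hne
    exact (NNReal.summable_coe.2 h2).congr fun i => Real.coe_toNNReal _ (hdm0 i)
  have hL2p : ∀ i, (∫⁻ x : ℝ × ℝ, (‖Ep i x‖₊ : ℝ≥0∞) ^ (2:ℝ) ∂volume) ^ (1/2:ℝ) ≤
      ENNReal.ofReal (K * dp i) := by
    intro i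
    have h2 := (hEp i).2 2 (by norm_num)
    rw [Nat.cast_ofNat] at h2
    have harg : H^2 * C₁ * (1/2 * C₂ * (dp i)^2) = (K * dp i)^2 := by
      rw [mul_pow, hKsq]; ring
    rw [harg] at h2
    calc (∫⁻ x : ℝ × ℝ, (‖Ep i x‖₊ : ℝ≥0∞) ^ (2:ℝ) ∂volume) ^ (1/2:ℝ)
        ≤ (ENNReal.ofReal ((K * dp i)^2)) ^ (1/2:ℝ) := ENNReal.rpow_le_rpow h2 (by norm_num)
      _ = ENNReal.ofReal (((K * dp i)^2) ^ (1/2:ℝ)) :=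
          ENNReal.ofReal_rpow_of_nonneg (sq_nonneg _) (by norm_num)
      _ = ENNReal.ofReal (K * dp i) := by
          rw [← Real.sqrt_eq_rpow, Real.sqrt_sq (mul_nonneg hK0 (hdp0 i))]
  have hL2m : ∀ i, (∫⁻ x : ℝ × ℝ, (‖Em i x‖₊ : ℝ≥0∞) ^ (2:ℝ) ∂volume) ^ (1/2:ℝ) ≤
      ENNReal.ofReal (K * dm i) := by
    intro i
    have h2 := (hEm i).2 2 (by norm_num)
    rw [Nat.cast_ofNat] at h2
    have harg : H^2 * C₁ * (1/2 * C₂ * (dm i)^2) = (K * dm i)^2 := by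
      rw [mul_pow, hKsq]; ring
    rw [harg] at h2
    calc (∫⁻ x : ℝ × ℝ, (‖Em i x‖₊ : ℝ≥0∞) ^ (2:ℝ) ∂volume) ^ (1/2:ℝ)
        ≤ (ENNReal.ofReal ((K * dm i)^2)) ^ (1/2:ℝ) := ENNReal.rpow_le_rpow h2 (by norm_num)
      _ = ENNReal.ofReal (((K * dm i)^2) ^ (1/2:ℝ)) :=
          ENNReal.ofReal_rpow_of_nonneg (sq_nonneg _) (by norm_num)
      _ = ENNReal.ofReal (K * dm i) := by
          rw [← Real.sqrt_eq_rpow, Real.sqrt_sq (mul_nonneg hK0 (hdm0 i))]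
  have hL1p : ∀ i, (∫⁻ x : ℝ × ℝ, (‖Ep i x‖₊ : ℝ≥0∞) ∂volume) ≤
      ENNReal.ofReal (H * C₁ * (1/2 * C₂)) * ENNReal.ofReal (dp i) := by
    intro i
    have h1 := (hEp i).2 1 le_rfl
    rw [Nat.cast_one] at h1
    simp only [ENNReal.rpow_one] at h1
    refine le_trans h1 ?_
    rw [← ENNReal.ofReal_mul (by positivity)]
    refine ENNReal.ofReal_le_ofReal ?_
    have hsq : (dp i)^2 ≤ dp i := by nlinarith [hdp0 i, hdp1 i]
    calc H^1 * C₁ * (1/2 * C₂ * (dp i)^2) = (H * C₁ * (1/2 * C₂)) * (dp i)^2 := by ring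
      _ ≤ (H * C₁ * (1/2 * C₂)) * dp i :=
          mul_le_mul_of_nonneg_left hsq (by positivity)
  have hL1m : ∀ i, (∫⁻ x : ℝ × ℝ, (‖Em i x‖₊ : ℝ≥0∞) ∂volume) ≤
      ENNReal.ofReal (H * C₁ * (1/2 * C₂)) * ENNReal.ofReal (dm i) := by
    intro i
    have h1 := (hEm i).2 1 le_rfl
    rw [Nat.cast_one] at h1
    simp only [ENNReal.rpow_one] at h1
    refine le_trans h1 ?_
    rw [← ENNReal.ofReal_mul (by positivity)]
    refine ENNReal.ofReal_le_ofReal ?_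
    have hsq : (dm i)^2 ≤ dm i := by nlinarith [hdm0 i, hdm1 i]
    calc H^1 * C₁ * (1/2 * C₂ * (dm i)^2) = (H * C₁ * (1/2 * C₂)) * (dm i)^2 := by ring
      _ ≤ (H * C₁ * (1/2 * C₂)) * dm i :=
          mul_le_mul_of_nonneg_left hsq (by positivity)
  set Gp : ℝ × ℝ → ℝ≥0∞ := fun x => ∑' i, (‖Ep i x‖₊ : ℝ≥0∞) with hGp
  set Gm : ℝ × ℝ → ℝ≥0∞ := fun x => ∑' i, (‖Em i x‖₊ : ℝ≥0∞) with hGm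
  have hGpm : Measurable Gp :=
    Measurable.ennreal_tsum fun i => ((hEp i).1.nnnorm.coe_nnreal_ennreal)
  have hGmm : Measurable Gm :=
    Measurable.ennreal_tsum fun i => ((hEm i).1.nnnorm.coe_nnreal_ennreal)
  have haep : ∀ᵐ x : ℝ × ℝ ∂volume, Summable fun i => Ep i x := by
    have hfin : (∫⁻ x, Gp x ∂volume) < ⊤ := by
      rw [hGp]
      rw [lintegral_tsum fun i => ((hEp i).1.nnnorm.coe_nnreal_ennreal).aemeasurable]
      calc ∑' i, ∫⁻ x, (‖Ep i x‖₊ : ℝ≥0∞) ∂volume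
          ≤ ∑' i, (ENNReal.ofReal (H * C₁ * (1/2 * C₂)) * ENNReal.ofReal (dp i)) :=
            ENNReal.tsum_le_tsum hL1p
        _ = ENNReal.ofReal (H * C₁ * (1/2 * C₂)) * ∑' i, ENNReal.ofReal (dp i) :=
            ENNReal.tsum_mul_left
        _ ≤ ENNReal.ofReal (H * C₁ * (1/2 * C₂)) * 1 := mul_le_mul_right hvolp _
        _ < ⊤ := by rw [mul_one]; exact ENNReal.ofReal_lt_top
    filter_upwards [ae_lt_top hGpm hfin.ne] with x hx
    exact Summable.of_nnnorm (ENNReal.tsum_coe_ne_top_iff_summable.1 hx.ne)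
  have haem : ∀ᵐ x : ℝ × ℝ ∂volume, Summable fun i => Em i x := by
    have hfin : (∫⁻ x, Gm x ∂volume) < ⊤ := by
      rw [hGm]
      rw [lintegral_tsum fun i => ((hEm i).1.nnnorm.coe_nnreal_ennreal).aemeasurable]
      calc ∑' i, ∫⁻ x, (‖Em i x‖₊ : ℝ≥0∞) ∂volume
          ≤ ∑' i, (ENNReal.ofReal (H * C₁ * (1/2 * C₂)) * ENNReal.ofReal (dm i)) :=
            ENNReal.tsum_le_tsum hL1m
        _ = ENNReal.ofReal (H * C₁ * (1/2 * C₂)) * ∑' i, ENNReal.ofReal (dm i) :=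
            ENNReal.tsum_mul_left
        _ ≤ ENNReal.ofReal (H * C₁ * (1/2 * C₂)) * 1 := mul_le_mul_right hvolm _
        _ < ⊤ := by rw [mul_one]; exact ENNReal.ofReal_lt_top
    filter_upwards [ae_lt_top hGmm hfin.ne] with x hx
    exact Summable.of_nnnorm (ENNReal.tsum_coe_ne_top_iff_summable.1 hx.ne)
  have hptb : ∀ (F : ℕ → ℝ × ℝ → ℝ) (x : ℝ × ℝ),
      (‖∑' i, F i x‖₊ : ℝ≥0∞) ≤ ∑' i, (‖F i x‖₊ : ℝ≥0∞) := by
    intro F x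
    by_cases hs : Summable fun i => ‖F i x‖₊
    · calc (‖∑' i, F i x‖₊ : ℝ≥0∞) ≤ ((∑' i, ‖F i x‖₊ : ℝ≥0) : ℝ≥0∞) :=
          ENNReal.coe_le_coe.2 (nnnorm_tsum_le hs)
        _ = ∑' i, (‖F i x‖₊ : ℝ≥0∞) := ENNReal.coe_tsum hs
    · have htop : (∑' i, (‖F i x‖₊ : ℝ≥0∞)) = ⊤ := by
        by_contra h'
        exact hs (ENNReal.tsum_coe_ne_top_iff_summable.1 h')
      rw [htop]
      exact le_top
  have hSpm : AEMeasurable (fun x : ℝ × ℝ => ∑' i, Ep i x) volume := by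
    refine aemeasurable_of_tendsto_metrizable_ae' (f := fun n x => ∑ i ∈ Finset.range n, Ep i x)
      (fun n => (Finset.measurable_sum _ fun i _ => (hEp i).1).aemeasurable) ?_
    filter_upwards [haep] with x hx
    exact hx.hasSum.tendsto_sum_nat
  have hSmm : AEMeasurable (fun x : ℝ × ℝ => ∑' i, Em i x) volume := by
    refine aemeasurable_of_tendsto_metrizable_ae' (f := fun n x => ∑ i ∈ Finset.range n, Em i x)
      (fun n => (Finset.measurable_sum _ fun i _ => (hEm i).1).aemeasurable) ?_
    filter_upwards [haem] with x hx
    exact hx.hasSum.tendsto_sum_nat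
  have hEaem : AEMeasurable E volume := hSpm.sub hSmm
  have hEbound : eLpNorm E 2 volume ≤
      ENNReal.ofReal (K * ∑' i, dp i) + ENNReal.ofReal (K * ∑' i, dm i) := by
    rw [eLpNorm_eq_lintegral_rpow_enorm_toReal two_ne_zero ENNReal.ofNat_ne_top]
    simp only [ENNReal.toReal_ofNat]
    calc (∫⁻ x, (‖E x‖₊ : ℝ≥0∞) ^ (2:ℝ) ∂volume) ^ (1/2:ℝ)
        ≤ (∫⁻ x, (Gp x + Gm x) ^ (2:ℝ) ∂volume) ^ (1/2:ℝ) := by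
          refine ENNReal.rpow_le_rpow (lintegral_mono fun x => ?_) (by norm_num)
          refine ENNReal.rpow_le_rpow ?_ (by norm_num)
          calc (‖E x‖₊ : ℝ≥0∞)
              ≤ (‖∑' i, Ep i x‖₊ : ℝ≥0∞) + (‖∑' i, Em i x‖₊ : ℝ≥0∞) := by
                have h0 : E x = (∑' i, Ep i x) - (∑' i, Em i x) := rfl
                rw [h0]
                exact_mod_cast nnnorm_sub_le _ _
            _ ≤ Gp x + Gm x := add_le_add (hptb Ep x) (hptb Em x)
      _ ≤ (∫⁻ x, Gp x ^ (2:ℝ) ∂volume) ^ (1/2:ℝ) + (∫⁻ x, Gm x ^ (2:ℝ) ∂volume) ^ (1/2:ℝ) := by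
          have := ENNReal.lintegral_Lp_add_le (μ := (volume : Measure (ℝ × ℝ))) hGpm.aemeasurable hGmm.aemeasurable one_le_two
          simpa [Pi.add_apply] using this
      _ ≤ (∑' i, (∫⁻ x, ((‖Ep i x‖₊ : ℝ≥0∞)) ^ (2:ℝ) ∂volume) ^ (1/2:ℝ))
          + (∑' i, (∫⁻ x, ((‖Em i x‖₊ : ℝ≥0∞)) ^ (2:ℝ) ∂volume) ^ (1/2:ℝ)) := by
          refine add_le_add ?_ ?_
          · exact stmt4_lintegral_Lp_tsum_le
              (fun i => (hEp i).1.nnnorm.coe_nnreal_ennreal) one_le_two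
          · exact stmt4_lintegral_Lp_tsum_le
              (fun i => (hEm i).1.nnnorm.coe_nnreal_ennreal) one_le_two
      _ ≤ (∑' i, ENNReal.ofReal (K * dp i)) + (∑' i, ENNReal.ofReal (K * dm i)) :=
          add_le_add (ENNReal.tsum_le_tsum hL2p) (ENNReal.tsum_le_tsum hL2m)
      _ = ENNReal.ofReal (K * ∑' i, dp i) + ENNReal.ofReal (K * ∑' i, dm i) := by
          rw [← ENNReal.ofReal_tsum_of_nonneg (fun i => mul_nonneg hK0 (hdp0 i))
              (hsump.mul_left K),
            ← ENNReal.ofReal_tsum_of_nonneg (fun i => mul_nonneg hK0 (hdm0 i))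
              (hsumm.mul_left K), tsum_mul_left, tsum_mul_left]
  have hSp0 : 0 ≤ ∑' i, dp i := tsum_nonneg hdp0
  have hSm0 : 0 ≤ ∑' i, dm i := tsum_nonneg hdm0
  have h1 : ENNReal.ofReal (K * ∑' i, dp i) + ENNReal.ofReal (K * ∑' i, dm i)
      = ENNReal.ofReal (K * ((∑' i, dp i) + ∑' i, dm i)) := by
    rw [← ENNReal.ofReal_add (mul_nonneg hK0 hSp0) (mul_nonneg hK0 hSm0), mul_add]
  rw [h1] at hEbound
  have hfin : eLpNorm E 2 volume < ⊤ := lt_of_le_of_lt hEbound ENNReal.ofReal_lt_top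
  refine ⟨⟨hEaem.aestronglyMeasurable, hfin⟩, ?_⟩
  calc (eLpNorm E 2 volume).toReal
      ≤ (ENNReal.ofReal (K * ((∑' i, dp i) + ∑' i, dm i))).toReal :=
        ENNReal.toReal_mono ENNReal.ofReal_ne_top hEbound
    _ = K * ((∑' i, dp i) + ∑' i, dm i) :=
        ENNReal.toReal_ofReal (mul_nonneg hK0 (add_nonneg hSp0 hSm0))
end
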